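/- arXiv:0903.4764 — 3 statements merged into one kernel-verified Lean document; each statement's English description precedes it below -/
import Mathlib

section
/- Let (R, V) be a LEARS with reflectable subspace V′ and associated data Δ, S_α, and G as in the standard setup. Then: (i) for α, β ∈ Δ with (α, α) ≤ (β, β) one has S_β ⊆ S_α; (ii) for every α ∈ Δ, the set S_α spans V⁰ over ℚ; (iii) if α ∈ Δ has minimal length (i.e., (α,α) ≤ (β,β) for all β ∈ Δ), then the subgroup generated by S_α equals G. -/
/-
Every `δ ∈ Δ` is a root or twice a root, so `σ_δ` preserves `R` and fixes `V⁰`; hence for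
`t ∈ S_β` the composite `σ_β ∘ σ_{β+t}` acts on `R` as the translation `x ↦ x - ⟨x, β⟩ t`.
Applied to `α + s` this puts `S_β` in the span of `S_α` whenever `(α, β) ≠ 0`; applied to `α`
it gives `S_β ⊆ S_α` when moreover `α` is not longer than `β`, because then `⟨α, β⟩ = ±1` or
`β = ±α`. Irreducibility joins any two elements of `Δ` by a path of non-orthogonal neighbours,
and such a path can be shortened to a single step. Finally `V = V′ ⊕ V⁰` turns
`S_β ⊆ span S_α` for all `β ∈ Δ` into `span S_α = V⁰`.
-/

open Submodule

/-- The reflection `σ_α(x) = x - ⟨x,α⟩α` where `⟨x,α⟩ = 2(x,α)/(α,α)`. -/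
def rroot {V : Type*} [AddCommGroup V] [Module ℚ V]
    (B : LinearMap.BilinForm ℚ V) (α x : V) : V :=
  x - (2 * B x α / B α α) • α

/-- A locally extended affine root system (axioms (A1)–(A4)). -/
def IsLEARS {V : Type*} [AddCommGroup V] [Module ℚ V]
    (B : LinearMap.BilinForm ℚ V) (R : Set V) : Prop :=
  (∀ α ∈ R, B α α ≠ 0) ∧
  Submodule.span ℚ R = ⊤ ∧
  (∀ α ∈ R, ∀ β ∈ R, ∃ n : ℤ, 2 * B α β / B β β = (n : ℚ)) ∧
  (∀ α ∈ R, ∀ β ∈ R, rroot B α β ∈ R) ∧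
  (∀ R₁ R₂ : Set V, R = R₁ ∪ R₂ → (∀ x ∈ R₁, ∀ y ∈ R₂, B x y = 0) →
    R₁ = ∅ ∨ R₂ = ∅)

/-- The image `R̄` of `R` in `V̄ = V/V⁰`. -/
def Rbar {V : Type*} [AddCommGroup V] [Module ℚ V]
    (B : LinearMap.BilinForm ℚ V) (R : Set V) : Set (V ⧸ LinearMap.ker B) :=
  (LinearMap.ker B).mkQ '' R

/-- `R̄^red = {ᾱ ∈ R̄ : ᾱ/2 ∉ R̄}` (which equals `R̄` when `R̄` is reduced). -/
def RbarRed {V : Type*} [AddCommGroup V] [Module ℚ V]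
    (B : LinearMap.BilinForm ℚ V) (R : Set V) : Set (V ⧸ LinearMap.ker B) :=
  {a ∈ Rbar B R | (2 : ℚ)⁻¹ • a ∉ Rbar B R}

/-- `Δ = {α ∈ V′ : α + s ∈ R for some s ∈ V⁰}`, where `V′ = span ℚ P` is the reflectable
subspace determined by the set `P` of representatives of a reflectable base. -/
def DeltaSet {V : Type*} [AddCommGroup V] [Module ℚ V]
    (B : LinearMap.BilinForm ℚ V) (R P : Set V) : Set V :=
  {α : V | α ∈ Submodule.span ℚ P ∧ ∃ s ∈ LinearMap.ker B, α + s ∈ R}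

/-- `S_α = {s ∈ V⁰ : α + s ∈ R}`. -/
def transSet {V : Type*} [AddCommGroup V] [Module ℚ V]
    (B : LinearMap.BilinForm ℚ V) (R : Set V) (α : V) : Set V :=
  {s : V | s ∈ LinearMap.ker B ∧ α + s ∈ R}

/-- `G`, the subgroup of `V⁰` generated by `⋃_{α ∈ Δ} S_α`. -/
def Ggrp {V : Type*} [AddCommGroup V] [Module ℚ V]
    (B : LinearMap.BilinForm ℚ V) (R P : Set V) : AddSubgroup V :=
  AddSubgroup.closure (⋃ α ∈ DeltaSet B R P, transSet B R α)

def RelPath {α : Type*} (r : α → α → Prop) : ℕ → α → α → Prop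
  | 0 => Eq
  | n + 1 => fun a b => ∃ c, r a c ∧ RelPath r n c b

namespace RelPath

variable {α : Type*} {r : α → α → Prop}

lemma snoc : ∀ {n : ℕ} {a b c : α}, RelPath r n a b → r b c → RelPath r (n + 1) a c
  | 0, _, _, _, rfl, h => ⟨_, h, rfl⟩
  | _ + 1, _, _, _, ⟨d, had, hd⟩, h => ⟨d, had, snoc hd h⟩

lemma map {f : α → α} (hf : ∀ x y, r x y → r (f x) (f y)) :
    ∀ {n : ℕ} {a b : α}, RelPath r n a b → RelPath r n (f a) (f b)
  | 0, _, _, rfl => rfl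
  | _ + 1, _, _, ⟨c, hac, hc⟩ => ⟨f c, hf _ _ hac, map hf hc⟩

end RelPath

section Reflection

variable {V : Type*} [AddCommGroup V] [Module ℚ V] {B : LinearMap.BilinForm ℚ V}

lemma apply_add_of_mem_ker_left {s : V} (hs : s ∈ LinearMap.ker B) (x y : V) :
    B (x + s) y = B x y := by
  rw [LinearMap.mem_ker] at hs
  simp [hs]

lemma apply_add_add_of_mem_ker (hB : B.IsSymm) {s t : V} (hs : s ∈ LinearMap.ker B)
    (ht : t ∈ LinearMap.ker B) (x y : V) : B (x + s) (y + t) = B x y := by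
  rw [apply_add_of_mem_ker_left hs, hB.eq, apply_add_of_mem_ker_left ht, hB.eq]

lemma rroot_add_of_mem_ker {t : V} (ht : t ∈ LinearMap.ker B) (g x : V) :
    rroot B g (x + t) = rroot B g x + t := by
  simp only [rroot, apply_add_of_mem_ker_left ht]
  abel

lemma rroot_inv_two_smul (g x : V) : rroot B ((2 : ℚ)⁻¹ • g) x = rroot B g x := by
  rcases eq_or_ne (B g g) 0 with h | h
  · simp [rroot, h]
  · simp only [rroot, map_smul, LinearMap.smul_apply, smul_eq_mul, smul_smul]
    congr 2
    field_simp

lemma rroot_self {g : V} (hg : B g g ≠ 0) : rroot B g g = -g := by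
  rw [rroot, mul_div_assoc, div_self hg]
  module

lemma apply_rroot_right (x g y : V) :
    B x (rroot B g y) = B x y - 2 * B y g / B g g * B x g := by
  simp [rroot]

lemma apply_rroot_rroot (hB : B.IsSymm) {g : V} (hg : B g g ≠ 0) (x y : V) :
    B (rroot B g x) (rroot B g y) = B x y := by
  simp only [rroot, map_sub, map_smul, LinearMap.sub_apply, LinearMap.smul_apply, smul_eq_mul]
  rw [hB.eq g y]
  field_simp
  ring

lemma rroot_rroot_add (hB : B.IsSymm) {g t : V} (hg : B g g ≠ 0) (ht : t ∈ LinearMap.ker B)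
    (x : V) : rroot B g (rroot B (g + t) x) = x - (2 * B x g / B g g) • t := by
  have hxt : B x (g + t) = B x g := by rw [hB.eq, apply_add_of_mem_ker_left ht, hB.eq]
  have hσ : rroot B (g + t) x = (x - (2 * B x g / B g g) • g) + -((2 * B x g / B g g) • t) := by
    rw [rroot, hxt, apply_add_add_of_mem_ker hB ht ht]
    module
  rw [hσ, rroot_add_of_mem_ker (neg_mem (Submodule.smul_mem _ _ ht))]
  simp only [rroot, map_sub, map_smul, LinearMap.sub_apply, LinearMap.smul_apply, smul_eq_mul]
  field_simp
  module

lemma mkQ_rroot {Bbar : LinearMap.BilinForm ℚ (V ⧸ LinearMap.ker B)}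
    (hBbar : ∀ x y : V, Bbar ((LinearMap.ker B).mkQ x) ((LinearMap.ker B).mkQ y) = B x y)
    (g x : V) :
    (LinearMap.ker B).mkQ (rroot B g x)
      = rroot Bbar ((LinearMap.ker B).mkQ g) ((LinearMap.ker B).mkQ x) := by
  rw [rroot, rroot, map_sub, map_smul, hBbar, hBbar]

end Reflection

namespace IsLEARS

variable {V : Type*} [AddCommGroup V] [Module ℚ V] {B : LinearMap.BilinForm ℚ V} {R : Set V}

lemma neg_mem (hR : IsLEARS B R) {x : V} (hx : x ∈ R) : -x ∈ R := by
  simpa [rroot_self (hR.1 x hx)] using hR.2.2.2.1 x hx x hx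

lemma rroot_mem (hR : IsLEARS B R) {d x : V} (hd : d ∈ R ∨ (2 : ℚ)⁻¹ • d ∈ R) (hx : x ∈ R) :
    rroot B d x ∈ R := by
  rcases hd with hd | hd
  · exact hR.2.2.2.1 d hd x hx
  · simpa [rroot_inv_two_smul] using hR.2.2.2.1 _ hd x hx

end IsLEARS

section Delta

variable {V : Type*} [AddCommGroup V] [Module ℚ V] {B : LinearMap.BilinForm ℚ V} {R P : Set V}

lemma disjoint_span_ker (hinj : Set.InjOn (LinearMap.ker B).mkQ P)
    (hli : LinearIndependent ℚ
      ((↑) : ((LinearMap.ker B).mkQ '' P) → V ⧸ LinearMap.ker B)) :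
    Disjoint (span ℚ P) (LinearMap.ker B) := by
  have h : LinearIndepOn ℚ (LinearMap.ker B).mkQ P := (linearIndepOn_iff_image hinj).mpr hli
  simpa using Submodule.range_ker_disjoint (f := (LinearMap.ker B).mkQ) (v := Subtype.val) h

lemma eq_of_sub_mem_ker (hdisj : Disjoint (span ℚ P) (LinearMap.ker B)) {x y : V}
    (hx : x ∈ span ℚ P) (hy : y ∈ span ℚ P) (h : x - y ∈ LinearMap.ker B) : x = y :=
  sub_eq_zero.mp (disjoint_def.mp hdisj _ (sub_mem hx hy) h)

lemma exists_mem_span_sub_mem_ker (hspan : span ℚ ((LinearMap.ker B).mkQ '' P) = ⊤) (v : V) :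
    ∃ p ∈ span ℚ P, v - p ∈ LinearMap.ker B := by
  have hv : (LinearMap.ker B).mkQ v ∈ (span ℚ P).map (LinearMap.ker B).mkQ := by
    rw [← span_image, hspan]
    trivial
  obtain ⟨p, hp, hpv⟩ := hv
  exact ⟨p, hp, (Submodule.Quotient.eq _).mp hpv.symm⟩

lemma exists_mem_span_mkQ_eq_foldr (hR : IsLEARS B R) (hPR : P ⊆ R)
    {Bbar : LinearMap.BilinForm ℚ (V ⧸ LinearMap.ker B)}
    (hBbar : ∀ x y : V, Bbar ((LinearMap.ker B).mkQ x) ((LinearMap.ker B).mkQ y) = B x y) :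
    ∀ (l : List (V ⧸ LinearMap.ker B)) (b : V ⧸ LinearMap.ker B),
      (∀ γ ∈ l, γ ∈ (LinearMap.ker B).mkQ '' P) → b ∈ (LinearMap.ker B).mkQ '' P →
      ∃ g ∈ R, g ∈ span ℚ P ∧ (LinearMap.ker B).mkQ g = l.foldr (rroot Bbar) b
  | [], _, _, ⟨p, hp, hpb⟩ => ⟨p, hPR hp, subset_span hp, hpb⟩
  | γ :: l, b, hl, hb => by
    obtain ⟨g, hgR, hgP, hgq⟩ :=
      exists_mem_span_mkQ_eq_foldr hR hPR hBbar l b (fun x hx => hl x (List.mem_cons_of_mem _ hx))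
        hb
    obtain ⟨p, hp, rfl⟩ := hl γ List.mem_cons_self
    exact ⟨rroot B p g, hR.2.2.2.1 p (hPR hp) g hgR,
      sub_mem hgP (smul_mem _ _ (subset_span hp)), by rw [List.foldr_cons, mkQ_rroot hBbar, hgq]⟩

lemma mem_of_mkQ_mem_rbarRed (hR : IsLEARS B R) (hPR : P ⊆ R)
    (hdisj : Disjoint (span ℚ P) (LinearMap.ker B))
    {Bbar : LinearMap.BilinForm ℚ (V ⧸ LinearMap.ker B)}
    (hBbar : ∀ x y : V, Bbar ((LinearMap.ker B).mkQ x) ((LinearMap.ker B).mkQ y) = B x y)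
    (hreflbase : ∀ a ∈ RbarRed B R,
      ∃ (l : List (V ⧸ LinearMap.ker B)) (b : V ⧸ LinearMap.ker B),
        (∀ γ ∈ l, γ ∈ (LinearMap.ker B).mkQ '' P) ∧
        b ∈ (LinearMap.ker B).mkQ '' P ∧
        a = l.foldr (rroot Bbar) b)
    {w : V} (hw : w ∈ span ℚ P) (hwR : (LinearMap.ker B).mkQ w ∈ RbarRed B R) : w ∈ R := by
  obtain ⟨l, b, hl, hb, hfold⟩ := hreflbase _ hwR
  obtain ⟨g, hgR, hgP, hgq⟩ := exists_mem_span_mkQ_eq_foldr hR hPR hBbar l b hl hb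
  rwa [← eq_of_sub_mem_ker hdisj hgP hw ((Submodule.Quotient.eq _).mp (hgq.trans hfold.symm))]

lemma mem_or_inv_two_smul_mem_of_mem_deltaSet (hR : IsLEARS B R) (hPR : P ⊆ R)
    (hdisj : Disjoint (span ℚ P) (LinearMap.ker B))
    {Bbar : LinearMap.BilinForm ℚ (V ⧸ LinearMap.ker B)}
    (hBbar : ∀ x y : V, Bbar ((LinearMap.ker B).mkQ x) ((LinearMap.ker B).mkQ y) = B x y)
    (hreflbase : ∀ a ∈ RbarRed B R,
      ∃ (l : List (V ⧸ LinearMap.ker B)) (b : V ⧸ LinearMap.ker B),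
        (∀ γ ∈ l, γ ∈ (LinearMap.ker B).mkQ '' P) ∧
        b ∈ (LinearMap.ker B).mkQ '' P ∧
        a = l.foldr (rroot Bbar) b) :
    ∀ δ ∈ DeltaSet B R P, δ ∈ R ∨ (2 : ℚ)⁻¹ • δ ∈ R := by
  rintro δ ⟨hδP, s, hs, hδs⟩
  have hπ : (LinearMap.ker B).mkQ (δ + s) = (LinearMap.ker B).mkQ δ := by
    simp [(Submodule.Quotient.mk_eq_zero _).mpr hs]
  by_cases hred : (LinearMap.ker B).mkQ δ ∈ RbarRed B R
  · exact Or.inl (mem_of_mkQ_mem_rbarRed hR hPR hdisj hBbar hreflbase hδP hred)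
  refine Or.inr (mem_of_mkQ_mem_rbarRed hR hPR hdisj hBbar hreflbase (smul_mem _ _ hδP) ?_)
  have hhalf : (2 : ℚ)⁻¹ • (LinearMap.ker B).mkQ δ ∈ Rbar B R :=
    not_not.mp fun h => hred ⟨⟨_, hδs, hπ⟩, h⟩
  refine ⟨by simpa using hhalf, ?_⟩
  -- a root `r` with `r̄ = δ̄ / 4` would have `⟨r, δ + s⟩ = 1/2`
  rintro ⟨r, hr, hrδ⟩
  obtain ⟨n, hn⟩ := hR.2.2.1 r hr _ hδs
  have hself : B (δ + s) (δ + s) = B δ δ := by rw [← hBbar, hπ, hBbar]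
  have hδδ : B δ δ ≠ 0 := hself ▸ hR.1 _ hδs
  have hrδs : B r (δ + s) = 4⁻¹ * B δ δ := by
    rw [← hBbar, hrδ, hπ]
    simp only [map_smul, smul_smul, LinearMap.smul_apply, smul_eq_mul, hBbar]
    norm_num
  rw [hrδs, hself] at hn
  have h2n : ((2 * n : ℤ) : ℚ) = 1 := by
    push_cast
    rw [← hn]
    field_simp
    norm_num
  have : 2 * n = 1 := by exact_mod_cast h2n
  omega

end Delta

section Translations

variable {V : Type*} [AddCommGroup V] [Module ℚ V] {B : LinearMap.BilinForm ℚ V} {R P : Set V}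

lemma apply_self_ne_zero_of_mem_deltaSet (hR : IsLEARS B R) (hB : B.IsSymm) {δ : V}
    (hδ : δ ∈ DeltaSet B R P) : B δ δ ≠ 0 := by
  obtain ⟨-, s, hs, hδs⟩ := hδ
  exact apply_add_add_of_mem_ker hB hs hs δ δ ▸ hR.1 _ hδs

lemma exists_int_eq_two_mul_apply_div (hR : IsLEARS B R) (hB : B.IsSymm) {α β : V}
    (hα : α ∈ DeltaSet B R P) (hβ : β ∈ DeltaSet B R P) :
    ∃ n : ℤ, 2 * B α β / B β β = n := by
  obtain ⟨-, s, hs, hαs⟩ := hα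
  obtain ⟨-, t, ht, hβt⟩ := hβ
  simpa only [apply_add_add_of_mem_ker hB hs ht, apply_add_add_of_mem_ker hB ht ht]
    using hR.2.2.1 _ hαs _ hβt

lemma transSet_subset_transSet_rroot (hR : IsLEARS B R)
    (hΔ : ∀ δ ∈ DeltaSet B R P, δ ∈ R ∨ (2 : ℚ)⁻¹ • δ ∈ R) {δ : V} (hδ : δ ∈ DeltaSet B R P)
    (β : V) : transSet B R β ⊆ transSet B R (rroot B δ β) :=
  fun _ ⟨ht, hβt⟩ => ⟨ht, rroot_add_of_mem_ker ht δ β ▸ hR.rroot_mem (hΔ δ hδ) hβt⟩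

lemma rroot_mem_deltaSet (hR : IsLEARS B R)
    (hΔ : ∀ δ ∈ DeltaSet B R P, δ ∈ R ∨ (2 : ℚ)⁻¹ • δ ∈ R) {δ β : V}
    (hδ : δ ∈ DeltaSet B R P) (hβ : β ∈ DeltaSet B R P) : rroot B δ β ∈ DeltaSet B R P := by
  obtain ⟨hβP, s, hs⟩ := hβ
  exact ⟨sub_mem hβP (smul_mem _ _ hδ.1), s, transSet_subset_transSet_rroot hR hΔ hδ β hs⟩

lemma sub_smul_mem_of_mem_transSet (hR : IsLEARS B R) (hB : B.IsSymm)
    (hΔ : ∀ δ ∈ DeltaSet B R P, δ ∈ R ∨ (2 : ℚ)⁻¹ • δ ∈ R) {x δ t : V} (hx : x ∈ R)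
    (hδ : δ ∈ DeltaSet B R P) (ht : t ∈ transSet B R δ) :
    x - (2 * B x δ / B δ δ) • t ∈ R := by
  rw [← rroot_rroot_add hB (apply_self_ne_zero_of_mem_deltaSet hR hB hδ) ht.1]
  exact hR.rroot_mem (hΔ δ hδ) (hR.2.2.2.1 _ ht.2 x hx)

lemma add_mem_of_sub_mem (hR : IsLEARS B R) (hB : B.IsSymm)
    (hΔ : ∀ δ ∈ DeltaSet B R P, δ ∈ R ∨ (2 : ℚ)⁻¹ • δ ∈ R) {δ t : V}
    (hδ : δ ∈ DeltaSet B R P) (ht : t ∈ LinearMap.ker B) (h : δ - t ∈ R) : δ + t ∈ R := by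
  have hσ := hR.rroot_mem (hΔ δ hδ) h
  rw [sub_eq_add_neg, rroot_add_of_mem_ker (neg_mem ht),
    rroot_self (apply_self_ne_zero_of_mem_deltaSet hR hB hδ)] at hσ
  simpa [add_comm] using hR.neg_mem hσ

lemma transSet_subset_span_transSet (hR : IsLEARS B R) (hB : B.IsSymm)
    (hΔ : ∀ δ ∈ DeltaSet B R P, δ ∈ R ∨ (2 : ℚ)⁻¹ • δ ∈ R) {α β : V}
    (hα : α ∈ DeltaSet B R P) (hβ : β ∈ DeltaSet B R P) (hαβ : B α β ≠ 0) :
    transSet B R β ⊆ span ℚ (transSet B R α) := by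
  intro t ht
  obtain ⟨-, s, hs, hαs⟩ := hα
  set c := 2 * B α β / B β β
  have hc : c ≠ 0 :=
    div_ne_zero (mul_ne_zero two_ne_zero hαβ) (apply_self_ne_zero_of_mem_deltaSet hR hB hβ)
  have hsct : s - c • t ∈ transSet B R α := by
    refine ⟨sub_mem hs (smul_mem _ _ ht.1), ?_⟩
    have h := sub_smul_mem_of_mem_transSet hR hB hΔ hαs hβ ht
    rw [apply_add_of_mem_ker_left hs] at h
    rwa [add_sub_assoc] at h
  have hct : c • t ∈ span ℚ (transSet B R α) := by
    simpa using sub_mem (subset_span (s := transSet B R α) ⟨hs, hαs⟩) (subset_span hsct)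
  simpa [smul_smul, inv_mul_cancel₀ hc] using smul_mem _ c⁻¹ hct

end Translations

section RootLengths

variable {V : Type*} [AddCommGroup V] [Module ℚ V] {B : LinearMap.BilinForm ℚ V} {R P : Set V}

lemma eq_of_apply_eq_apply_self (hB : B.IsSymm) (hpos : ∀ x : V, 0 ≤ B x x)
    (hdisj : Disjoint (span ℚ P) (LinearMap.ker B)) {x y : V} (hx : x ∈ span ℚ P)
    (hy : y ∈ span ℚ P) (hxx : B x y = B x x) (hyy : B x y = B y y) : x = y := by
  refine eq_of_sub_mem_ker hdisj hx hy
    ((B.apply_apply_same_eq_zero_iff hpos (LinearMap.BilinForm.isSymm_iff.mp hB)).mp ?_)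
  simp only [map_sub, LinearMap.sub_apply, hB.eq y x]
  linarith

/-- Cauchy–Schwarz gives `⟨α, β⟩² ≤ 4 |α|² / |β|² ≤ 4`, and `⟨α, β⟩ = ±2` forces equality. -/
lemma two_mul_apply_div_eq_one_or_eq_neg_one_or_eq_or_eq_neg (hR : IsLEARS B R)
    (hB : B.IsSymm) (hpos : ∀ x : V, 0 ≤ B x x) (hdisj : Disjoint (span ℚ P) (LinearMap.ker B))
    {α β : V} (hα : α ∈ DeltaSet B R P) (hβ : β ∈ DeltaSet B R P) (hαβ : B α β ≠ 0)
    (hle : B α α ≤ B β β) :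
    2 * B α β / B β β = 1 ∨ 2 * B α β / B β β = -1 ∨ β = α ∨ β = -α := by
  obtain ⟨n, hn⟩ := exists_int_eq_two_mul_apply_div hR hB hα hβ
  have ha : 0 < B α α := (hpos α).lt_of_ne' (apply_self_ne_zero_of_mem_deltaSet hR hB hα)
  have hb : 0 < B β β := (hpos β).lt_of_ne' (apply_self_ne_zero_of_mem_deltaSet hR hB hβ)
  have hcs := B.apply_sq_le_of_symm hpos (LinearMap.BilinForm.isSymm_iff.mp hB) α β
  have hc : B α β = n * B β β / 2 := by
    rw [div_eq_iff hb.ne'] at hn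
    linarith
  have hn4 : (n : ℚ) ^ 2 ≤ 4 := by
    refine le_of_mul_le_mul_right ?_ (pow_pos hb 2)
    rw [hc] at hcs
    nlinarith [mul_le_mul_of_nonneg_right hle hb.le]
  have hn0 : n ≠ 0 := by
    rintro rfl
    simp [hc] at hαβ
  have hn' : n = 1 ∨ n = -1 ∨ n = 2 ∨ n = -2 := by
    have : n ^ 2 ≤ 4 := by exact_mod_cast hn4
    have : -2 ≤ n := by nlinarith
    have : n ≤ 2 := by nlinarith
    omega
  rcases hn' with rfl | rfl | rfl | rfl
  · exact Or.inl (by simpa using hn)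
  · exact Or.inr (Or.inl (by simpa using hn))
  · refine Or.inr (Or.inr (Or.inl ?_))
    have hab : B α α = B β β := by
      rw [hc] at hcs
      nlinarith
    refine eq_of_apply_eq_apply_self hB hpos hdisj hβ.1 hα.1 ?_ ?_ <;>
      rw [hB.eq β α, hc] <;> push_cast <;> linarith
  · refine Or.inr (Or.inr (Or.inr ?_))
    have hab : B α α = B β β := by
      rw [hc] at hcs
      nlinarith
    refine (eq_of_apply_eq_apply_self hB hpos hdisj (neg_mem hα.1) hβ.1 ?_ ?_).symm <;>
      simp only [map_neg, LinearMap.neg_apply, neg_neg, hc] <;> push_cast <;> linarith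

lemma mem_of_two_mul_apply_div_eq_one_or_eq_neg_one (hR : IsLEARS B R) (hB : B.IsSymm)
    (hΔ : ∀ δ ∈ DeltaSet B R P, δ ∈ R ∨ (2 : ℚ)⁻¹ • δ ∈ R) {α β : V}
    (hα : α ∈ DeltaSet B R P) (hβ : β ∈ DeltaSet B R P)
    (h : 2 * B α β / B β β = 1 ∨ 2 * B α β / B β β = -1) : α ∈ R := by
  refine (hΔ α hα).resolve_right fun hhalf => ?_
  obtain ⟨-, t, ht, hβt⟩ := hβ
  obtain ⟨k, hk⟩ := hR.2.2.1 _ hhalf _ hβt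
  rw [apply_add_add_of_mem_ker hB ht ht, hB.eq, apply_add_of_mem_ker_left ht, hB.eq,
    map_smul, LinearMap.smul_apply, smul_eq_mul] at hk
  have h2k : ((2 * k : ℤ) : ℚ) = 1 ∨ ((2 * k : ℤ) : ℚ) = -1 := by
    push_cast
    rw [← hk]
    rcases h with h | h <;> [left; right] <;> rw [← h] <;> ring
  norm_cast at h2k
  omega

lemma transSet_subset_of_apply_ne_zero_of_le (hR : IsLEARS B R) (hB : B.IsSymm)
    (hpos : ∀ x : V, 0 ≤ B x x) (hdisj : Disjoint (span ℚ P) (LinearMap.ker B))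
    (hΔ : ∀ δ ∈ DeltaSet B R P, δ ∈ R ∨ (2 : ℚ)⁻¹ • δ ∈ R) {α β : V}
    (hα : α ∈ DeltaSet B R P) (hβ : β ∈ DeltaSet B R P) (hαβ : B α β ≠ 0)
    (hle : B α α ≤ B β β) : transSet B R β ⊆ transSet B R α := by
  intro t ⟨ht, hβt⟩
  refine ⟨ht, ?_⟩
  rcases two_mul_apply_div_eq_one_or_eq_neg_one_or_eq_or_eq_neg hR hB hpos hdisj hα hβ hαβ hle
    with h | h | rfl | rfl
  · have hαR := mem_of_two_mul_apply_div_eq_one_or_eq_neg_one hR hB hΔ hα hβ (Or.inl h)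
    refine add_mem_of_sub_mem hR hB hΔ hα ht ?_
    simpa [h] using sub_smul_mem_of_mem_transSet hR hB hΔ hαR hβ ⟨ht, hβt⟩
  · have hαR := mem_of_two_mul_apply_div_eq_one_or_eq_neg_one hR hB hΔ hα hβ (Or.inr h)
    simpa [h] using sub_smul_mem_of_mem_transSet hR hB hΔ hαR hβ ⟨ht, hβt⟩
  · exact hβt
  · refine add_mem_of_sub_mem hR hB hΔ hα ht ?_
    simpa [sub_eq_neg_add] using hR.neg_mem hβt

end RootLengths

section Connectivity

variable {V : Type*} [AddCommGroup V] [Module ℚ V] {B : LinearMap.BilinForm ℚ V} {R P : Set V}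

lemma exists_relPath (hR : IsLEARS B R) (hB : B.IsSymm)
    (hspan : span ℚ ((LinearMap.ker B).mkQ '' P) = ⊤)
    (hdisj : Disjoint (span ℚ P) (LinearMap.ker B)) {α β : V}
    (hα : α ∈ DeltaSet B R P) (hβ : β ∈ DeltaSet B R P) :
    ∃ n, RelPath (fun x y => y ∈ DeltaSet B R P ∧ B x y ≠ 0) n α β := by
  let C : Set V := {x ∈ R | ∃ δ ∈ span ℚ P, x - δ ∈ LinearMap.ker B ∧
    ∃ n, RelPath (fun x y => y ∈ DeltaSet B R P ∧ B x y ≠ 0) n α δ}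
  have horth : ∀ x ∈ C, ∀ y ∈ R \ C, B x y = 0 := by
    rintro x ⟨-, δ, -, hxδ, n, hn⟩ y ⟨hy, hyC⟩
    by_contra hxy
    obtain ⟨ε, hεP, hyε⟩ := exists_mem_span_sub_mem_ker hspan y
    have hε : ε ∈ DeltaSet B R P := ⟨hεP, y - ε, hyε, by rwa [add_sub_cancel]⟩
    refine hyC ⟨hy, ε, hεP, hyε, n + 1, hn.snoc ⟨hε, ?_⟩⟩
    rwa [← apply_add_add_of_mem_ker hB hxδ hyε, add_sub_cancel, add_sub_cancel]
  obtain ⟨hαP, s, hs, hαs⟩ := hα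
  obtain ⟨hβP, t, ht, hβt⟩ := hβ
  have hαC : α + s ∈ C := ⟨hαs, α, hαP, by rwa [add_sub_cancel_left], 0, rfl⟩
  rcases hR.2.2.2.2 C (R \ C) (Set.union_sdiff_cancel (Set.sep_subset _ _)).symm horth with h | h
  · rw [h] at hαC
    exact absurd hαC (Set.notMem_empty _)
  · have hβC : β + t ∈ C := by
      by_contra hc
      have hβt' : β + t ∈ R \ C := ⟨hβt, hc⟩
      rwa [h] at hβt'
    obtain ⟨-, δ, hδP, hβδ, n, hn⟩ := hβC
    obtain rfl : β = δ :=
      eq_of_sub_mem_ker hdisj hβP hδP (by simpa [add_sub_right_comm] using sub_mem hβδ ht)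
    exact ⟨n, hn⟩

/-- A path `α, γ, δ, …, β` with `(α, δ) = 0` is shortened by reflecting its tail `δ, …, β` in `γ`,
which preserves the length of `β` and can only enlarge its translation set. -/
lemma transSet_subset_of_relPath (hR : IsLEARS B R) (hB : B.IsSymm)
    (hpos : ∀ x : V, 0 ≤ B x x) (hdisj : Disjoint (span ℚ P) (LinearMap.ker B))
    (hΔ : ∀ δ ∈ DeltaSet B R P, δ ∈ R ∨ (2 : ℚ)⁻¹ • δ ∈ R) :
    ∀ (n : ℕ) {α β : V}, α ∈ DeltaSet B R P →
      RelPath (fun x y => y ∈ DeltaSet B R P ∧ B x y ≠ 0) n α β →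
      (B α α ≤ B β β → transSet B R β ⊆ transSet B R α) ∧
        transSet B R β ⊆ span ℚ (transSet B R α)
  | 0, _, _, _, rfl => ⟨fun _ => le_rfl, subset_span⟩
  | 1, _, _, hα, ⟨_, ⟨hβ, hαβ⟩, rfl⟩ =>
    ⟨transSet_subset_of_apply_ne_zero_of_le hR hB hpos hdisj hΔ hα hβ hαβ,
      transSet_subset_span_transSet hR hB hΔ hα hβ hαβ⟩
  | n + 2, α, β, hα, ⟨γ, ⟨hγ, hαγ⟩, δ, ⟨hδ, hγδ⟩, hpath⟩ => by
    by_cases hαδ : B α δ = 0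
    · have hγγ := apply_self_ne_zero_of_mem_deltaSet hR hB hγ
      have hpath' : RelPath (fun x y => y ∈ DeltaSet B R P ∧ B x y ≠ 0) n
          (rroot B γ δ) (rroot B γ β) :=
        hpath.map fun x y ⟨hy, hxy⟩ =>
          ⟨rroot_mem_deltaSet hR hΔ hγ hy, by rwa [apply_rroot_rroot hB hγγ]⟩
      have hασδ : B α (rroot B γ δ) ≠ 0 := by
        rw [apply_rroot_right, hαδ, hB.eq δ γ]
        simpa using ⟨⟨hγδ, hγγ⟩, hαγ⟩
      obtain ⟨hle, hspan⟩ := transSet_subset_of_relPath hR hB hpos hdisj hΔ (n + 1) hα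
        ⟨_, ⟨rroot_mem_deltaSet hR hΔ hγ hδ, hασδ⟩, hpath'⟩
      have hsub := transSet_subset_transSet_rroot hR hΔ hγ β
      exact ⟨fun h => hsub.trans (hle (by rwa [apply_rroot_rroot hB hγγ])), hsub.trans hspan⟩
    · exact transSet_subset_of_relPath hR hB hpos hdisj hΔ (n + 1) hα ⟨δ, ⟨hδ, hαδ⟩, hpath⟩

end Connectivity

section TranslationSets

variable {V : Type*} [AddCommGroup V] [Module ℚ V] {B : LinearMap.BilinForm ℚ V} {R P : Set V}

lemma transSet_subset_of_mem_deltaSet (hR : IsLEARS B R) (hB : B.IsSymm)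
    (hpos : ∀ x : V, 0 ≤ B x x) (hspan : span ℚ ((LinearMap.ker B).mkQ '' P) = ⊤)
    (hdisj : Disjoint (span ℚ P) (LinearMap.ker B))
    (hΔ : ∀ δ ∈ DeltaSet B R P, δ ∈ R ∨ (2 : ℚ)⁻¹ • δ ∈ R) {α β : V}
    (hα : α ∈ DeltaSet B R P) (hβ : β ∈ DeltaSet B R P) :
    (B α α ≤ B β β → transSet B R β ⊆ transSet B R α) ∧
      transSet B R β ⊆ span ℚ (transSet B R α) :=
  let ⟨n, hn⟩ := exists_relPath hR hB hspan hdisj hα hβ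
  transSet_subset_of_relPath hR hB hpos hdisj hΔ n hα hn

lemma span_transSet_eq_ker (hR : IsLEARS B R)
    (hspan : span ℚ ((LinearMap.ker B).mkQ '' P) = ⊤)
    (hdisj : Disjoint (span ℚ P) (LinearMap.ker B)) {α : V}
    (hsub : ∀ β ∈ DeltaSet B R P, transSet B R β ⊆ span ℚ (transSet B R α)) :
    span ℚ (transSet B R α) = LinearMap.ker B := by
  have hle : span ℚ (transSet B R α) ≤ LinearMap.ker B := span_le.mpr fun _ hs => hs.1
  have htop : span ℚ (transSet B R α) ⊔ span ℚ P = ⊤ := by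
    rw [eq_top_iff, ← hR.2.1, span_le]
    intro x hx
    obtain ⟨p, hp, hxp⟩ := exists_mem_span_sub_mem_ker hspan x
    have hpx : p + (x - p) ∈ R := by rwa [add_sub_cancel]
    have h := add_mem (mem_sup_right hp) (mem_sup_left (hsub p ⟨hp, _, hxp, hpx⟩ ⟨hxp, hpx⟩))
    rwa [add_sub_cancel] at h
  calc span ℚ (transSet B R α) = span ℚ (transSet B R α) ⊔ span ℚ P ⊓ LinearMap.ker B := by
        rw [hdisj.eq_bot, sup_bot_eq]
    _ = (span ℚ (transSet B R α) ⊔ span ℚ P) ⊓ LinearMap.ker B := (sup_inf_assoc_of_le _ hle).symm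
    _ = LinearMap.ker B := by rw [htop, top_inf_eq]

lemma closure_transSet_eq_ggrp {α : V} (hα : α ∈ DeltaSet B R P)
    (hsub : ∀ β ∈ DeltaSet B R P, transSet B R β ⊆ transSet B R α) :
    AddSubgroup.closure (transSet B R α) = Ggrp B R P :=
  le_antisymm (AddSubgroup.closure_mono (Set.subset_biUnion_of_mem (u := transSet B R) hα))
    ((AddSubgroup.closure_le _).mpr
      (Set.iUnion₂_subset fun β hβ => (hsub β hβ).trans AddSubgroup.subset_closure))

end TranslationSets

theorem transSet_antitone_spans_and_generates_general
    {V : Type*} [AddCommGroup V] [Module ℚ V]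
    (B : LinearMap.BilinForm ℚ V)
    (hsym : ∀ x y : V, B x y = B y x)
    (hpos : ∀ x : V, 0 ≤ B x x)
    (R : Set V) (hR : IsLEARS B R)
    (Bbar : LinearMap.BilinForm ℚ (V ⧸ LinearMap.ker B))
    (hBbar : ∀ x y : V,
      Bbar ((LinearMap.ker B).mkQ x) ((LinearMap.ker B).mkQ y) = B x y)
    (P : Set V) (hPR : P ⊆ R)
    (hinj : Set.InjOn (LinearMap.ker B).mkQ P)
    (hli : LinearIndependent ℚ
      ((↑) : ((LinearMap.ker B).mkQ '' P) → V ⧸ LinearMap.ker B))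
    (hspan : Submodule.span ℚ ((LinearMap.ker B).mkQ '' P) = ⊤)
    (hreflbase : ∀ a ∈ RbarRed B R,
      ∃ (l : List (V ⧸ LinearMap.ker B)) (b : V ⧸ LinearMap.ker B),
        (∀ γ ∈ l, γ ∈ (LinearMap.ker B).mkQ '' P) ∧
        b ∈ (LinearMap.ker B).mkQ '' P ∧
        a = l.foldr (rroot Bbar) b)
    :
    (∀ α ∈ DeltaSet B R P, ∀ β ∈ DeltaSet B R P,
      B α α ≤ B β β → transSet B R β ⊆ transSet B R α) ∧
    (∀ α ∈ DeltaSet B R P, Submodule.span ℚ (transSet B R α) = LinearMap.ker B) ∧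
    (∀ α ∈ DeltaSet B R P, (∀ β ∈ DeltaSet B R P, B α α ≤ B β β) →
      AddSubgroup.closure (transSet B R α) = Ggrp B R P) := by
  have hB : B.IsSymm := LinearMap.BilinForm.isSymm_def.mpr hsym
  have hdisj := disjoint_span_ker hinj hli
  have hΔ := mem_or_inv_two_smul_mem_of_mem_deltaSet hR hPR hdisj hBbar hreflbase
  have key := fun α (hα : α ∈ DeltaSet B R P) β (hβ : β ∈ DeltaSet B R P) =>
    transSet_subset_of_mem_deltaSet hR hB hpos hspan hdisj hΔ hα hβ
  exact ⟨fun α hα β hβ => (key α hα β hβ).1,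
    fun α hα => span_transSet_eq_ker hR hspan hdisj fun β hβ => (key α hα β hβ).2,
    fun α hα hmin => closure_transSet_eq_ggrp hα fun β hβ => (key α hα β hβ).1 (hmin β hβ)⟩

/-- (i) longer roots have smaller translation sets; (ii) each `S_α` spans `V⁰`;
(iii) for `α` of minimal length, `⟨S_α⟩ = G`. -/
theorem transSet_antitone_spans_and_generates
    {V : Type*} [AddCommGroup V] [Module ℚ V]
    (B : LinearMap.BilinForm ℚ V)
    (hsym : ∀ x y : V, B x y = B y x)
    (hpos : ∀ x : V, 0 ≤ B x x)
    (R : Set V) (hR : IsLEARS B R)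
    (Bbar : LinearMap.BilinForm ℚ (V ⧸ LinearMap.ker B))
    (hBbar : ∀ x y : V,
      Bbar ((LinearMap.ker B).mkQ x) ((LinearMap.ker B).mkQ y) = B x y)
    (P : Set V) (hPR : P ⊆ R)
    (hinj : Set.InjOn (LinearMap.ker B).mkQ P)
    (hPred : (LinearMap.ker B).mkQ '' P ⊆ RbarRed B R)
    (hli : LinearIndependent ℚ
      ((↑) : ((LinearMap.ker B).mkQ '' P) → V ⧸ LinearMap.ker B))
    (hspan : Submodule.span ℚ ((LinearMap.ker B).mkQ '' P) = ⊤)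
    (hreflbase : ∀ a ∈ RbarRed B R,
      ∃ (l : List (V ⧸ LinearMap.ker B)) (b : V ⧸ LinearMap.ker B),
        (∀ γ ∈ l, γ ∈ (LinearMap.ker B).mkQ '' P) ∧
        b ∈ (LinearMap.ker B).mkQ '' P ∧
        a = l.foldr (rroot Bbar) b)
    :
    (∀ α ∈ DeltaSet B R P, ∀ β ∈ DeltaSet B R P,
      B α α ≤ B β β → transSet B R β ⊆ transSet B R α) ∧
    (∀ α ∈ DeltaSet B R P, Submodule.span ℚ (transSet B R α) = LinearMap.ker B) ∧
    (∀ α ∈ DeltaSet B R P, (∀ β ∈ DeltaSet B R P, B α α ≤ B β β) →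
      AddSubgroup.closure (transSet B R α) = Ggrp B R P) :=
  transSet_antitone_spans_and_generates_general B hsym hpos R hR Bbar hBbar P hPR hinj hli hspan
    hreflbase
end

section
/- Let (R, V) be a LEARS with radical V⁰. If the abelian group ⟨R⟩ ∩ V⁰ is free, then the abelian group ⟨R⟩ is free. -/
/-!
The coroot pairings `x ↦ (⟨x, β⟩)_{β ∈ R}` give a homomorphism `Φ : ⟨R⟩ → ℤ^R` whose kernel is
`⟨R⟩ ∩ V⁰`, because `R` spans `V`. Cauchy–Schwarz bounds `|⟨α, β⟩| ≤ 4` for roots, so every `Φ x`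
is bounded, i.e. takes finitely many values. Such functions extend to locally constant functions
on the Stone–Čech compactification of `R`, which form a free abelian group by Nöbeling's theorem;
so the image of `Φ` is a subgroup of a free abelian group, hence free, and
`0 → ⟨R⟩ ∩ V⁰ → ⟨R⟩ → im Φ → 0` splits.
-/

open Submodule

namespace Finsupp

variable {R ι : Type*} [LinearOrder ι]

theorem eq_zero_or_exists_mem_supported_Iic {M : Type*} [Semiring R] [AddCommMonoid M]
    [Module R M] {s : Set ι} {f : ι →₀ M} (hf : f ∈ supported M R s) :
    f = 0 ∨ ∃ j ∈ s, f ∈ supported M R (Set.Iic j) := by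
  rcases eq_or_ne f 0 with rfl | hf0
  · exact .inl rfl
  have hne := support_nonempty_iff.mpr hf0
  exact .inr ⟨_, (mem_supported R f).mp hf (f.support.max'_mem hne),
    (mem_supported R f).mpr fun j hj => f.support.le_max' j hj⟩

theorem linearIndependent_of_triangular [CommRing R] [NoZeroDivisors R] {v : ι → ι →₀ R}
    (hv : ∀ i j, i < j → v i j = 0) :
    LinearIndependent R (fun i : {i // v i i ≠ 0} => v i) := by
  classical
  refine linearIndependent_iff.mpr fun l hl => ?_
  by_contra hl0
  have hne := support_nonempty_iff.mpr hl0
  set m := l.support.max' hne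
  have hcoeff : linearCombination R (fun i : {i // v i i ≠ 0} => v i) l m = l m * v m m := by
    rw [linearCombination_apply, Finsupp.sum, finsetSum_apply,
      Finset.sum_eq_single m (fun j hj hjm => ?_) (fun h => absurd (l.support.max'_mem hne) h)]
    · simp
    · simp [hv j m (lt_of_le_of_ne (l.support.le_max' j hj) (Subtype.coe_injective.ne hjm))]
  rw [hl, zero_apply] at hcoeff
  exact mul_ne_zero (mem_support_iff.mp (l.support.max'_mem hne)) m.2 hcoeff.symm

theorem le_span_of_triangular [CommRing R] [WellFoundedLT ι] {N : Submodule R (ι →₀ R)}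
    {n : ι → ι →₀ R} (hn : ∀ i, n i ∈ N ⊓ supported R R (Set.Iic i))
    (hdvd : ∀ i, ∀ f ∈ N ⊓ supported R R (Set.Iic i), ∃ c, f i = c * n i i) :
    N ≤ span R (Set.range fun i : {i // n i i ≠ 0} => n i) := by
  set T := span R (Set.range fun i : {i // n i i ≠ 0} => n i)
  have hle : ∀ i, N ⊓ supported R R (Set.Iic i) ≤ T := by
    intro i
    induction i using WellFoundedLT.induction with
    | _ i IH =>
    have hlt : ∀ f ∈ N, (∀ j, i ≤ j → f j = 0) → f ∈ T := by
      intro f hfN hf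
      rcases eq_zero_or_exists_mem_supported_Iic (s := Set.Iio i) ((mem_supported' R f).mpr
        fun j hj => hf j (not_lt.mp hj)) with rfl | ⟨j, hj, hfj⟩
      · exact zero_mem T
      · exact IH j hj ⟨hfN, hfj⟩
    have hvanish : ∀ f ∈ supported R R (Set.Iic i), ∀ j, i < j → f j = 0 :=
      fun f hf j hij => (mem_supported' R f).mp hf j (not_le.mpr hij)
    have hni : n i ∈ T := by
      by_cases hnii : n i i = 0
      · refine hlt _ (hn i).1 fun j hij => ?_
        obtain hij | rfl := lt_or_eq_of_le hij
        exacts [hvanish _ (hn i).2 j hij, hnii]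
      · exact subset_span ⟨⟨i, hnii⟩, rfl⟩
    intro f hf
    obtain ⟨c, hc⟩ := hdvd i f hf
    have hrest : f - c • n i ∈ T := by
      refine hlt _ (sub_mem hf.1 (smul_mem _ _ (hn i).1)) fun j hij => ?_
      obtain hij | rfl := lt_or_eq_of_le hij
      · simp [hvanish f hf.2 j hij, hvanish _ (hn i).2 j hij]
      · simpa using sub_eq_zero.mpr hc
    simpa using add_mem hrest (smul_mem T c hni)
  intro f hf
  rcases eq_zero_or_exists_mem_supported_Iic (s := Set.univ)
    ((mem_supported R f).mpr (Set.subset_univ _)) with rfl | ⟨j, -, hfj⟩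
  exacts [zero_mem T, hle j ⟨hf, hfj⟩]

end Finsupp

section PID

variable {R : Type*} [CommRing R] [IsDomain R] [IsPrincipalIdealRing R]

open Finsupp in
theorem Module.free_submodule_finsupp {ι : Type*} [LinearOrder ι] [WellFoundedLT ι]
    (N : Submodule R (ι →₀ R)) : Module.Free R N := by
  let I : ι → Ideal R := fun i => (N ⊓ supported R R (Set.Iic i)).map (lapply i)
  choose n hnN hng using fun i => mem_map.mp (IsPrincipal.generator_mem (I i))
  have hdvd : ∀ i, ∀ f ∈ N ⊓ supported R R (Set.Iic i), ∃ c, f i = c * n i i := fun i f hf =>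
    (hng i).symm ▸ (IsPrincipal.mem_iff_eq_smul_generator (I i)).mp (mem_map_of_mem hf)
  have hspan : span R (Set.range fun i : {i // n i i ≠ 0} => n i) = N :=
    le_antisymm (span_le.mpr (Set.range_subset_iff.mpr fun i => (hnN i).1))
      (le_span_of_triangular hnN hdvd)
  have hv : ∀ i j, i < j → n i j = 0 := fun i j hij =>
    (mem_supported' R _).mp (hnN i).2 j (not_le.mpr hij)
  exact .of_basis ((Module.Basis.span (linearIndependent_of_triangular hv)).map
    (LinearEquiv.ofEq _ _ hspan))

theorem Module.free_submodule {M : Type*} [AddCommGroup M] [Module R M] [Module.Free R M]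
    (N : Submodule R M) : Module.Free R N := by
  obtain ⟨_, _⟩ := exists_wellFoundedLT (Module.Free.ChooseBasisIndex R M)
  let e := (Module.Free.chooseBasis R M).repr
  have := Module.free_submodule_finsupp (N.map e.toLinearMap)
  exact .of_equiv' this (N.equivMapOfInjective _ e.injective).symm

end PID

theorem Module.free_of_free_ker_of_free_range {R M N : Type*} [Ring R] [AddCommGroup M]
    [Module R M] [AddCommGroup N] [Module R N] (f : M →ₗ[R] N) [Module.Free R (LinearMap.ker f)]
    [Module.Free R (LinearMap.range f)] : Module.Free R M := by
  obtain ⟨s, hs⟩ := f.rangeRestrict.exists_rightInverse_of_surjective f.range_rangeRestrict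
  have : Module.Free R (LinearMap.ker f.rangeRestrict) := f.ker_rangeRestrict ▸ inferInstance
  let e := ((LinearMap.exact_subtype_ker_map f.rangeRestrict).splitSurjectiveEquiv
    (injective_subtype _) ⟨s, hs⟩).1
  exact .of_equiv' inferInstance e.symm

section StoneCech

variable {S X : Type*}

theorem exists_locallyConstant_comp_pure_eq (f : S → X) (hf : (Set.range f).Finite) :
    ∃ g : LocallyConstant (Ultrafilter S) X, g ∘ pure = f := by
  let _ : TopologicalSpace (Set.range f) := ⊥
  have : DiscreteTopology (Set.range f) := ⟨rfl⟩
  have : Finite (Set.range f) := hf.to_subtype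
  let F := Ultrafilter.extend (Set.rangeFactorization f)
  refine ⟨⟨Subtype.val ∘ F, ?_⟩, funext fun s => ?_⟩
  · exact ((IsLocallyConstant.iff_continuous F).mpr (continuous_ultrafilter_extend _)).comp _
  · exact congrArg Subtype.val (ultrafilter_extend_pure _ s)

theorem LocallyConstant.comp_pure_injective :
    Function.Injective fun g : LocallyConstant (Ultrafilter S) X => g ∘ pure := by
  let _ : TopologicalSpace X := ⊥
  have : DiscreteTopology X := ⟨rfl⟩
  exact fun g h hgh => LocallyConstant.coe_injective
    (denseRange_pure.equalizer g.continuous h.continuous hgh)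

/-- Nöbeling's theorem, transported along `LocallyConstant (Ultrafilter S) ℤ ↪ (S → ℤ)`. -/
theorem Submodule.free_of_forall_finite_range (H : Submodule ℤ (S → ℤ))
    (hH : ∀ f ∈ H, (Set.range f).Finite) : Module.Free ℤ H := by
  let ρ : LocallyConstant (Ultrafilter S) ℤ →ₗ[ℤ] S → ℤ :=
    LinearMap.funLeft ℤ ℤ pure ∘ₗ LocallyConstant.coeFnₗ ℤ
  have hHρ : H ≤ LinearMap.range ρ := fun f hf => exists_locallyConstant_comp_pure_eq f (hH f hf)
  have : Module.Free ℤ (LocallyConstant (Ultrafilter S) ℤ) :=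
    LocallyConstant.freeOfProfinite (Profinite.of (Ultrafilter S))
  exact .of_equiv' (Module.free_submodule (H.comap ρ))
    ((H.comap ρ).equivMapOfInjective ρ LocallyConstant.comp_pure_injective ≪≫ₗ
      LinearEquiv.ofEq _ _ (map_comap_eq_of_le hHρ))

end StoneCech

section Pairing

variable {V : Type*} [AddCommGroup V] [Module ℚ V] (B : LinearMap.BilinForm ℚ V)

/-- Writing `m = ⟨α, β⟩` and `n = ⟨β, α⟩`, Cauchy–Schwarz gives `0 ≤ m n ≤ 4`, and `n = 0` forces
`m = 0`. -/
theorem abs_two_mul_div_le_four (hsym : ∀ x y : V, B x y = B y x) (hpos : ∀ x : V, 0 ≤ B x x)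
    {α β : V} (hα : B α α ≠ 0) (hβ : B β β ≠ 0) {n : ℤ} (hn : 2 * B β α / B α α = n) :
    |2 * B α β / B β β| ≤ 4 := by
  have hαpos := lt_of_le_of_ne (hpos α) hα.symm
  have hβpos := lt_of_le_of_ne (hpos β) hβ.symm
  rw [hsym β α] at hn
  rcases eq_or_ne (B α β) 0 with h0 | h0
  · simp [h0]
  have hn0 : (n : ℚ) ≠ 0 := hn ▸ div_ne_zero (mul_ne_zero two_ne_zero h0) hα
  have hcs := (B.apply_sq_le_of_symm hpos ⟨hsym⟩ α β)
  have hprod : 2 * B α β / B β β * n = 4 * B α β ^ 2 / (B α α * B β β) := by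
    rw [← hn]; field_simp; ring
  calc |2 * B α β / B β β| ≤ |2 * B α β / B β β| * |(n : ℚ)| :=
        le_mul_of_one_le_right (abs_nonneg _)
          (by exact_mod_cast Int.one_le_abs (by exact_mod_cast hn0))
    _ = 4 * B α β ^ 2 / (B α α * B β β) := by
        rw [← abs_mul, hprod, abs_of_nonneg (by positivity)]
    _ ≤ 4 := by rw [div_le_iff₀ (by positivity)]; linarith

variable {R : Set V}

theorem exists_int_bound_of_mem_closure (hsym : ∀ x y : V, B x y = B y x)
    (hpos : ∀ x : V, 0 ≤ B x x) (hroot : ∀ α ∈ R, B α α ≠ 0)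
    (hint : ∀ α ∈ R, ∀ β ∈ R, ∃ n : ℤ, 2 * B α β / B β β = n) {x : V}
    (hx : x ∈ AddSubgroup.closure R) :
    ∃ C : ℤ, ∀ β ∈ R, ∃ k : ℤ, 2 * B x β / B β β = k ∧ |k| ≤ C := by
  induction hx using AddSubgroup.closure_induction with
  | mem α hα =>
    refine ⟨4, fun β hβ => ?_⟩
    obtain ⟨k, hk⟩ := hint α hα β hβ
    obtain ⟨n, hn⟩ := hint β hβ α hα
    refine ⟨k, hk, ?_⟩
    exact_mod_cast hk ▸ abs_two_mul_div_le_four B hsym hpos (hroot α hα) (hroot β hβ) hn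
  | zero => exact ⟨0, fun β _ => ⟨0, by simp⟩⟩
  | add x y _ _ ihx ihy =>
    obtain ⟨C, hC⟩ := ihx
    obtain ⟨D, hD⟩ := ihy
    refine ⟨C + D, fun β hβ => ?_⟩
    obtain ⟨k, hk, hkC⟩ := hC β hβ
    obtain ⟨l, hl, hlD⟩ := hD β hβ
    refine ⟨k + l, ?_, (abs_add_le k l).trans (add_le_add hkC hlD)⟩
    simp only [map_add, LinearMap.add_apply, Int.cast_add, ← hk, ← hl]
    ring
  | neg x _ ihx =>
    obtain ⟨C, hC⟩ := ihx
    refine ⟨C, fun β hβ => ?_⟩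
    obtain ⟨k, hk, hkC⟩ := hC β hβ
    refine ⟨-k, ?_, by rwa [abs_neg]⟩
    simp only [map_neg, LinearMap.neg_apply, Int.cast_neg, ← hk]
    ring

theorem exists_corootPairing (hsym : ∀ x y : V, B x y = B y x) (hpos : ∀ x : V, 0 ≤ B x x)
    (hroot : ∀ α ∈ R, B α α ≠ 0) (hint : ∀ α ∈ R, ∀ β ∈ R, ∃ n : ℤ, 2 * B α β / B β β = n) :
    ∃ Φ : AddSubgroup.closure R →ₗ[ℤ] (R → ℤ),
      (∀ x β, (Φ x β : ℚ) = 2 * B x β / B β β) ∧ ∀ x, (Set.range (Φ x)).Finite := by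
  choose C hC using fun x : AddSubgroup.closure R =>
    exists_int_bound_of_mem_closure B hsym hpos hroot hint x.2
  have hnum : ∀ (x : AddSubgroup.closure R) (β : R),
      ((2 * B x β / B β β).num : ℚ) = 2 * B x β / B β β := fun x β => by
    obtain ⟨k, hk, -⟩ := hC x β β.2
    rw [hk, Rat.num_intCast]
  let Φ : AddSubgroup.closure R →+ (R → ℤ) :=
    AddMonoidHom.mk' (fun x β => (2 * B x β / B β β).num) fun x y => funext fun β =>
      Int.cast_injective (α := ℚ) (by
        rw [Pi.add_apply, Int.cast_add, hnum, hnum, hnum, AddSubgroup.coe_add, map_add,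
          LinearMap.add_apply, mul_add, add_div])
  refine ⟨Φ.toIntLinearMap, hnum, fun x => (Set.finite_Icc (-C x) (C x)).subset ?_⟩
  rintro _ ⟨β, rfl⟩
  obtain ⟨k, hk, hkC⟩ := hC x β β.2
  simpa [Φ, hk] using abs_le.mp hkC

theorem corootPairing_eq_zero_iff (hroot : ∀ α ∈ R, B α α ≠ 0) (hspan : span ℚ R = ⊤)
    {Φ : AddSubgroup.closure R →ₗ[ℤ] (R → ℤ)} (hΦ : ∀ x β, (Φ x β : ℚ) = 2 * B x β / B β β)
    (x : AddSubgroup.closure R) : Φ x = 0 ↔ (x : V) ∈ LinearMap.ker B := by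
  rw [LinearMap.mem_ker]
  constructor
  · intro h
    refine LinearMap.ext_on hspan fun β hβ => ?_
    have := hΦ x ⟨β, hβ⟩
    rw [h, Pi.zero_apply, Int.cast_zero, eq_comm, div_eq_zero_iff] at this
    simpa [hroot β hβ] using this
  · intro h
    funext β
    exact Int.cast_eq_zero.mp ((hΦ x β).trans (by simp [h]))

end Pairing

theorem free_ker_of_free_inf {V A : Type*} [AddCommGroup V] [AddCommGroup A] [Module ℤ A]
    {G K : AddSubgroup V} (Φ : G →ₗ[ℤ] A) (hΦ : ∀ x, Φ x = 0 ↔ (x : V) ∈ K)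
    [Module.Free ℤ ↥(G ⊓ K)] : Module.Free ℤ (LinearMap.ker Φ) := by
  let e : LinearMap.ker Φ ≃+ ↥(G ⊓ K) :=
    { toFun := fun x => ⟨x.1, x.1.2, (hΦ x).mp x.2⟩
      invFun := fun x => ⟨⟨x.1, x.2.1⟩, (hΦ _).mpr x.2.2⟩
      left_inv := fun _ => rfl
      right_inv := fun _ => rfl
      map_add' := fun _ _ => rfl }
  exact .of_equiv' ‹_› e.toIntLinearEquiv.symm

/-- If `⟨R⟩ ∩ V⁰` is a free abelian group, then `⟨R⟩` is free. -/
theorem closure_free_of_closure_inf_radical_free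
    {V : Type*} [AddCommGroup V] [Module ℚ V]
    (B : LinearMap.BilinForm ℚ V)
    (hsym : ∀ x y : V, B x y = B y x)
    (hpos : ∀ x : V, 0 ≤ B x x)
    (R : Set V) (hR : IsLEARS B R)
    (hfree : Module.Free ℤ
      ↥(AddSubgroup.closure R ⊓ (LinearMap.ker B).toAddSubgroup)) :
    Module.Free ℤ ↥(AddSubgroup.closure R) := by
  obtain ⟨hroot, hspan, hint, -, -⟩ := hR
  obtain ⟨Φ, hΦ, hfin⟩ := exists_corootPairing B hsym hpos hroot hint
  have : Module.Free ℤ (LinearMap.ker Φ) :=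
    free_ker_of_free_inf (K := (LinearMap.ker B).toAddSubgroup) Φ
      (corootPairing_eq_zero_iff B hroot hspan hΦ)
  have : Module.Free ℤ (LinearMap.range Φ) :=
    Submodule.free_of_forall_finite_range _ (by rintro _ ⟨x, rfl⟩; exact hfin x)
  exact Module.free_of_free_ker_of_free_range Φ
end

section
/- Suppose (R₁, V) and (R₂, W) are LEARS and φ : V → W is a ℚ-linear isomorphism with φ(R₁) = R₂. Then φ maps the radical of the form on V onto the radical of the form on W: φ(V⁰) = W⁰. -/
/-!
Reflection in a root `β` acts on the root string `{t : ℚ | α + t • β ∈ R₁}` as the point reflection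
`t ↦ -⟨α, β⟩ - t`. Transporting the reflection in `φ β` back along `φ` gives a second point
reflection `t ↦ -⟨φ α, φ β⟩ - t` of the same string, so the string is invariant under translation
by the difference of the two Cartan numbers. By Cauchy–Schwarz and integrality `|⟨γ, β⟩| ≤ 4`
for all roots, so the string is bounded and `φ` preserves Cartan numbers. By linearity
`⟨φ v, φ β⟩ = ⟨v, β⟩` for every vector `v`, and since the roots span, `v` lies in the radical iff
`⟨v, β⟩ = 0` for every root `β`.
-/

open Submodule

lemma eq_zero_of_forall_abs_add_natCast_mul_le {K : Type*} [Field K] [LinearOrder K]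
    [IsStrictOrderedRing K] [Archimedean K] {a d c : K} (h : ∀ k : ℕ, |a + k * d| ≤ c) :
    d = 0 := by
  by_contra hd
  have ha : |a| ≤ c := by simpa using h 0
  obtain ⟨k, hk⟩ := exists_nat_gt (2 * c / |d|)
  have hkd : (k : K) * |d| ≤ 2 * c :=
    calc (k : K) * |d| = |(a + k * d) - a| := by
          rw [add_sub_cancel_left, abs_mul, Nat.abs_cast]
      _ ≤ |a + k * d| + |a| := abs_sub _ _
      _ ≤ 2 * c := by linarith [h k]
  rw [div_lt_iff₀ (abs_pos.mpr hd)] at hk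
  exact hkd.not_gt hk

namespace LinearMap.BilinForm

variable {R M : Type*} [CommSemiring R] [AddCommMonoid M] [Module R M]
  {B : LinearMap.BilinForm R M}

lemma apply_eq_zero_iff_of_span_eq_top {s : Set M} (hs : span R s = ⊤) (v : M) :
    B v = 0 ↔ ∀ β ∈ s, B v β = 0 :=
  ⟨fun h β _ ↦ by rw [h, LinearMap.zero_apply], fun h ↦ ext_on hs fun β hβ ↦ h β hβ⟩

end LinearMap.BilinForm

section Cartan

variable {V : Type*} [AddCommGroup V] [Module ℚ V] {B : LinearMap.BilinForm ℚ V}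

variable (B) in
def cartan (x α : V) : ℚ := 2 * B x α / B α α

lemma rroot_eq_sub_cartan_smul (α x : V) : rroot B α x = x - cartan B x α • α := rfl

lemma cartan_eq_smul_flip_apply (x α : V) : cartan B x α = ((2 / B α α) • B.flip α) x := by
  rw [LinearMap.smul_apply, LinearMap.BilinForm.flip_apply, smul_eq_mul, cartan, div_mul_eq_mul_div]

lemma cartan_eq_zero_iff {x α : V} (hα : B α α ≠ 0) : cartan B x α = 0 ↔ B x α = 0 := by
  simp [cartan, hα]

lemma cartan_add_smul_self {β : V} (hβ : B β β ≠ 0) (α : V) (t : ℚ) :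
    cartan B (α + t • β) β = cartan B α β + 2 * t := by
  simp only [cartan, map_add, map_smul, LinearMap.add_apply, LinearMap.smul_apply, smul_eq_mul]
  field_simp

lemma rroot_add_smul_self {β : V} (hβ : B β β ≠ 0) (α : V) (t : ℚ) :
    rroot B β (α + t • β) = α + (-cartan B α β - t) • β := by
  rw [rroot_eq_sub_cartan_smul, cartan_add_smul_self hβ]
  module

lemma abs_cartan_le_four (hsym : ∀ x y : V, B x y = B y x) (hpos : ∀ x : V, 0 ≤ B x x)
    {β γ : V} (hγ : B γ γ ≠ 0) (hint : ∃ n : ℤ, cartan B β γ = n) : |cartan B γ β| ≤ 4 := by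
  obtain ⟨n, hn⟩ := hint
  by_cases hγβ : B γ β = 0
  · simp [cartan, hγβ]
  have hcs : B γ β ^ 2 ≤ B β β * B γ γ := by
    simpa [sq, hsym β γ, mul_comm] using B.apply_mul_apply_le_of_forall_zero_le hpos γ β
  have hβ : B β β ≠ 0 := by
    rintro hβ
    rw [hβ, zero_mul] at hcs
    exact hγβ (pow_eq_zero_iff two_ne_zero |>.mp (le_antisymm hcs (sq_nonneg _)))
  have hn0 : (n : ℚ) ≠ 0 := by
    rw [← hn, Ne, cartan_eq_zero_iff hγ, hsym]
    exact hγβ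
  have hprod : cartan B γ β * n = 4 * (B γ β ^ 2 / (B β β * B γ γ)) := by
    rw [← hn, cartan, cartan, hsym β γ]
    field_simp
    norm_num
  have hratio : B γ β ^ 2 / (B β β * B γ γ) ≤ 1 :=
    div_le_one_of_le₀ hcs (mul_nonneg (hpos β) (hpos γ))
  calc |cartan B γ β| ≤ |cartan B γ β| * |(n : ℚ)| :=
        le_mul_of_one_le_right (abs_nonneg _) (by exact_mod_cast Int.one_le_abs (mod_cast hn0))
    _ = 4 * (B γ β ^ 2 / (B β β * B γ γ)) := by
        rw [← abs_mul, hprod, abs_of_nonneg (by have := hpos β; have := hpos γ; positivity)]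
    _ ≤ 4 := by linarith

end Cartan

namespace IsLEARS

variable {V W : Type*} [AddCommGroup V] [Module ℚ V] [AddCommGroup W] [Module ℚ W]
  {B : LinearMap.BilinForm ℚ V} {C : LinearMap.BilinForm ℚ W} {R₁ : Set V} {R₂ : Set W}
  {α β γ : V}

lemma ne_zero (h : IsLEARS B R₁) (hα : α ∈ R₁) : B α α ≠ 0 := h.1 α hα

lemma span_eq_top (h : IsLEARS B R₁) : span ℚ R₁ = ⊤ := h.2.1

lemma exists_int_cartan_eq (h : IsLEARS B R₁) (hα : α ∈ R₁) (hβ : β ∈ R₁) :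
    ∃ n : ℤ, cartan B α β = n :=
  h.2.2.1 α hα β hβ

lemma rroot_mem_s9 (h : IsLEARS B R₁) (hα : α ∈ R₁) (hβ : β ∈ R₁) : rroot B α β ∈ R₁ :=
  h.2.2.2.1 α hα β hβ

lemma abs_cartan_le_four (h : IsLEARS B R₁) (hsym : ∀ x y : V, B x y = B y x)
    (hpos : ∀ x : V, 0 ≤ B x x) (hβ : β ∈ R₁) (hγ : γ ∈ R₁) : |cartan B γ β| ≤ 4 :=
  _root_.abs_cartan_le_four hsym hpos (h.ne_zero hγ) (h.exists_int_cartan_eq hβ hγ)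

theorem cartan_map_eq_of_mem (h₁ : IsLEARS B R₁) (h₂ : IsLEARS C R₂)
    (hsym : ∀ x y : V, B x y = B y x) (hpos : ∀ x : V, 0 ≤ B x x)
    {φ : V ≃ₗ[ℚ] W} (hφ : ⇑φ '' R₁ = R₂) (hα : α ∈ R₁) (hβ : β ∈ R₁) :
    cartan C (φ α) (φ β) = cartan B α β := by
  have hmem (x : V) : φ x ∈ R₂ ↔ x ∈ R₁ := hφ ▸ φ.injective.mem_set_image
  have hββ := h₁.ne_zero hβ
  have hφβ := h₂.ne_zero ((hmem β).2 hβ)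
  set n := cartan B α β
  set m := cartan C (φ α) (φ β)
  have hstep (t : ℚ) (ht : α + t • β ∈ R₁) : α + (t + (m - n)) • β ∈ R₁ := by
    have hφ_refl : α + (-m - t) • β ∈ R₁ := by
      have := h₂.rroot_mem_s9 ((hmem β).2 hβ) ((hmem _).2 ht)
      rwa [map_add, map_smul, rroot_add_smul_self hφβ, ← map_smul, ← map_add, hmem] at this
    have := h₁.rroot_mem_s9 hβ hφ_refl
    rwa [rroot_add_smul_self hββ, show -n - (-m - t) = t + (m - n) by ring] at this
  have hstring (k : ℕ) : α + (k * (m - n)) • β ∈ R₁ := by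
    induction k with
    | zero => simpa using hα
    | succ k ih => simpa [add_mul, add_comm] using hstep _ ih
  have hbounded (k : ℕ) : |n + k * (2 * (m - n))| ≤ 4 := by
    have := h₁.abs_cartan_le_four hsym hpos hβ (hstring k)
    rwa [cartan_add_smul_self hββ, mul_left_comm] at this
  have := eq_zero_of_forall_abs_add_natCast_mul_le hbounded
  linarith

theorem cartan_map_eq (h₁ : IsLEARS B R₁) (h₂ : IsLEARS C R₂)
    (hsym : ∀ x y : V, B x y = B y x) (hpos : ∀ x : V, 0 ≤ B x x)
    {φ : V ≃ₗ[ℚ] W} (hφ : ⇑φ '' R₁ = R₂) (v : V) (hβ : β ∈ R₁) :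
    cartan C (φ v) (φ β) = cartan B v β := by
  have hfunctional :
      ((2 / C (φ β) (φ β)) • C.flip (φ β)) ∘ₗ φ.toLinearMap = (2 / B β β) • B.flip β :=
    LinearMap.ext_on h₁.span_eq_top fun α hα ↦ by
      rw [LinearMap.comp_apply, LinearEquiv.coe_coe, ← cartan_eq_smul_flip_apply,
        ← cartan_eq_smul_flip_apply, h₁.cartan_map_eq_of_mem h₂ hsym hpos hφ hα hβ]
  have := congr($hfunctional v)
  rwa [LinearMap.comp_apply, LinearEquiv.coe_coe, ← cartan_eq_smul_flip_apply,
    ← cartan_eq_smul_flip_apply] at this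

end IsLEARS

theorem isomorphism_of_LEARS_maps_radical_onto_radical_general
    {V W : Type*} [AddCommGroup V] [Module ℚ V] [AddCommGroup W] [Module ℚ W]
    (B : LinearMap.BilinForm ℚ V) (C : LinearMap.BilinForm ℚ W)
    (hsymB : ∀ x y : V, B x y = B y x) (hposB : ∀ x : V, 0 ≤ B x x)
    (R₁ : Set V) (R₂ : Set W)
    (h₁ : IsLEARS B R₁) (h₂ : IsLEARS C R₂)
    (φ : V ≃ₗ[ℚ] W) (hφ : ⇑φ '' R₁ = R₂) :
    Submodule.map (φ : V →ₗ[ℚ] W) (LinearMap.ker B) = LinearMap.ker C := by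
  ext w
  rw [Submodule.mem_map_equiv, LinearMap.mem_ker, LinearMap.mem_ker,
    LinearMap.BilinForm.apply_eq_zero_iff_of_span_eq_top h₁.span_eq_top,
    LinearMap.BilinForm.apply_eq_zero_iff_of_span_eq_top h₂.span_eq_top, ← hφ,
    Set.forall_mem_image]
  refine forall₂_congr fun β hβ ↦ ?_
  rw [← cartan_eq_zero_iff (h₁.ne_zero hβ), ← cartan_eq_zero_iff (h₂.ne_zero (hφ ▸ ⟨β, hβ, rfl⟩)),
    ← h₁.cartan_map_eq h₂ hsymB hposB hφ _ hβ, φ.apply_symm_apply]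

/-- An isomorphism of LEARS maps radical onto radical. -/
theorem isomorphism_of_LEARS_maps_radical_onto_radical
    {V W : Type*} [AddCommGroup V] [Module ℚ V] [AddCommGroup W] [Module ℚ W]
    (B : LinearMap.BilinForm ℚ V) (C : LinearMap.BilinForm ℚ W)
    (hsymB : ∀ x y : V, B x y = B y x) (hposB : ∀ x : V, 0 ≤ B x x)
    (hsymC : ∀ x y : W, C x y = C y x) (hposC : ∀ x : W, 0 ≤ C x x)
    (R₁ : Set V) (R₂ : Set W)
    (h₁ : IsLEARS B R₁) (h₂ : IsLEARS C R₂)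
    (φ : V ≃ₗ[ℚ] W) (hφ : ⇑φ '' R₁ = R₂) :
    Submodule.map (φ : V →ₗ[ℚ] W) (LinearMap.ker B) = LinearMap.ker C :=
  isomorphism_of_LEARS_maps_radical_onto_radical_general B C hsymB hposB R₁ R₂ h₁ h₂ φ hφ
end
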